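/- arXiv:1412.4332 — 6 statements merged into one kernel-verified Lean document; each statement's English description precedes it below -/
import Mathlib

section
/- If x_1,…,x_N are positive real numbers with arithmetic mean x̄ = (1/N)Σ_k x_k, harmonic mean x_H defined by 1/x_H = (1/N)Σ_k 1/x_k, variance σ² = (1/N)Σ_k (x_k − x̄)², and x_k ≤ M for every k (with M > 0), then x̄ − x_H ≥ σ²/(2M). -/
/-!
For `0 < t ≤ M` and `a > 0`,
`1/t - 2/a + t/a² = (t - a)²/(t a²) ≥ (t - a)²/(M a²)`.
Averaging over the `x k` with `a = x̄` gives `1/x_H ≥ (x̄ + u)/x̄²` with `u = σ²/M`,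
hence `x̄ - x_H ≥ x̄ u/(x̄ + u)`. Finally `σ² ≤ mean (x²) ≤ M x̄`, so `u ≤ x̄`,
`x̄ + u ≤ 2 x̄`, and the right-hand side is at least `u/2 = σ²/(2M)`.
-/

open Finset

section WeightedMeans

variable {ι : Type*} (s : Finset ι) (w x : ι → ℝ)

theorem weighted_sum_sub_sq_eq (hw1 : ∑ i ∈ s, w i = 1) (a : ℝ)
    (ha : a = ∑ i ∈ s, w i * x i) :
    ∑ i ∈ s, w i * (x i - a) ^ 2 = ∑ i ∈ s, w i * x i ^ 2 - a ^ 2 := by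
  have expand : ∀ i, w i * (x i - a) ^ 2 = w i * x i ^ 2 - 2 * a * (w i * x i) + a ^ 2 * w i :=
    fun i => by ring
  simp only [expand, sum_add_distrib, sum_sub_distrib, ← mul_sum, hw1, ← ha]
  ring

theorem weighted_variance_le_mul_mean (hw : ∀ i ∈ s, 0 ≤ w i) (hw1 : ∑ i ∈ s, w i = 1)
    {M : ℝ} (hx : ∀ i ∈ s, 0 ≤ x i) (hxM : ∀ i ∈ s, x i ≤ M) :
    ∑ i ∈ s, w i * (x i - ∑ j ∈ s, w j * x j) ^ 2 ≤ M * ∑ i ∈ s, w i * x i := by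
  rw [weighted_sum_sub_sq_eq s w x hw1 _ rfl, mul_sum]
  have second_moment_le : ∑ i ∈ s, w i * x i ^ 2 ≤ ∑ i ∈ s, M * (w i * x i) :=
    sum_le_sum fun i hi => by
      nlinarith [mul_le_mul_of_nonneg_left (hxM i hi) (mul_nonneg (hw i hi) (hx i hi))]
  nlinarith [sq_nonneg (∑ j ∈ s, w j * x j)]

theorem sq_sub_div_self (t a : ℝ) (ht : t ≠ 0) : (t - a) ^ 2 / t = t - 2 * a + a ^ 2 / t := by
  field_simp
  ring

theorem weighted_variance_div_le (hw : ∀ i ∈ s, 0 ≤ w i) (hw1 : ∑ i ∈ s, w i = 1)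
    {M : ℝ} (hx : ∀ i ∈ s, 0 < x i) (hxM : ∀ i ∈ s, x i ≤ M) (a : ℝ)
    (ha : a = ∑ i ∈ s, w i * x i) :
    (∑ i ∈ s, w i * (x i - a) ^ 2) / M ≤ a ^ 2 * ∑ i ∈ s, w i * (1 / x i) - a := by
  calc (∑ i ∈ s, w i * (x i - a) ^ 2) / M
      = ∑ i ∈ s, w i * ((x i - a) ^ 2 / M) := by simp only [sum_div, mul_div_assoc]
    _ ≤ ∑ i ∈ s, w i * ((x i - a) ^ 2 / x i) := by
      gcongr with i hi
      · exact hw i hi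
      · exact hx i hi
      · exact hxM i hi
    _ = ∑ i ∈ s, (w i * x i - 2 * a * w i + a ^ 2 * (w i * (1 / x i))) := by
      refine sum_congr rfl fun i hi => ?_
      rw [sq_sub_div_self _ _ (hx i hi).ne']
      ring
    _ = a ^ 2 * ∑ i ∈ s, w i * (1 / x i) - a := by
      simp only [sum_add_distrib, sum_sub_distrib, ← mul_sum, hw1, ← ha]
      ring

end WeightedMeans

theorem half_le_sub_inv_of_add_le {a u h : ℝ} (ha : 0 < a) (hu : 0 ≤ u) (hua : u ≤ a)
    (hh : a + u ≤ a ^ 2 * h) : u / 2 ≤ a - h⁻¹ := by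
  have hh_pos : 0 < h := by nlinarith
  have inv_le : h⁻¹ ≤ a ^ 2 / (a + u) := by
    rw [inv_le_comm₀ hh_pos (by positivity), inv_div, div_le_iff₀ (by positivity)]
    linarith
  have key : u / 2 ≤ a - a ^ 2 / (a + u) := by
    rw [le_sub_iff_add_le, ← le_sub_iff_add_le', div_le_iff₀ (by positivity)]
    nlinarith
  linarith

/-- For positive reals `x 1, …, x N` with arithmetic mean `x̄`, harmonic mean `x_H`
(defined by `1/x_H = (1/N) ∑ 1/x k`), variance `σ²`, and `x k ≤ M` for all `k`
with `M > 0`, one has `x̄ − x_H ≥ σ²/(2M)`. -/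
theorem am_sub_hm_ge_variance_div (N : ℕ) (hN : 0 < N) (x : Fin N → ℝ)
    (hx : ∀ k, 0 < x k) (M : ℝ) (hM : 0 < M) (hxM : ∀ k, x k ≤ M)
    (xbar xH σ2 : ℝ)
    (hxbar : xbar = (1 / (N : ℝ)) * ∑ k, x k)
    (hxH : 1 / xH = (1 / (N : ℝ)) * ∑ k, 1 / x k)
    (hσ2 : σ2 = (1 / (N : ℝ)) * ∑ k, (x k - xbar) ^ 2) :
    xbar - xH ≥ σ2 / (2 * M) := by
  set w : Fin N → ℝ := fun _ => 1 / (N : ℝ)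
  have hw : ∀ k ∈ univ, 0 ≤ w k := fun _ _ => one_div_nonneg.mpr N.cast_nonneg
  have hw1 : ∑ k, w k = 1 := by simp [w, hN.ne']
  rw [mul_sum] at hxbar hxH hσ2
  have hxbar_pos : 0 < xbar := by
    rw [hxbar]
    exact sum_pos (fun k _ => mul_pos (by positivity) (hx k)) ⟨⟨0, hN⟩, mem_univ _⟩
  have hvar : σ2 ≤ M * xbar := by
    rw [hσ2, hxbar]
    exact weighted_variance_le_mul_mean univ w x hw hw1 (fun k _ => (hx k).le) fun k _ => hxM k
  have hdiv : σ2 / M ≤ xbar ^ 2 * (1 / xH) - xbar := by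
    rw [hσ2, hxH]
    exact weighted_variance_div_le univ w x hw hw1 (fun k _ => hx k) (fun k _ => hxM k) xbar hxbar
  have hσ2_nonneg : 0 ≤ σ2 / M := by rw [hσ2]; positivity
  have key := half_le_sub_inv_of_add_le (h := 1 / xH) hxbar_pos hσ2_nonneg
    ((div_le_iff₀' hM).mpr hvar) (by linarith)
  rwa [one_div, inv_inv, div_div, mul_comm M] at key
end

section
/- (Proposition 1, lower bound for equal populations) If all N parcels have the same population P_k = P0/N, then 1/OD − 1/PWD ≥ N·σ_A²/(2·A_max·P0), where σ_A² is the variance of the parcel areas and A_max is the largest parcel area. -/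
/-!
With `m` the mean area, the identity `1/a = 1/m - (a - m)/m² + (a - m)²/(a m²)` and `a ≤ A_max`
give `∑ 1/A_k ≥ N/m + V/(A_max m²)`, where `V = ∑ (A_k - m)² = N σ_A²`: the harmonic mean falls short
of the arithmetic one by a second-order term. Since `1/OD - 1/PWD = (A0 - N²/∑ 1/A_k)/P0` for equal
populations, it remains to invert this bound, which costs at most a factor `2` because
`V ≤ A_max ∑ A_k`.
-/

open Finset

lemma inv_sub_div_sq_add_sq_div_le_inv {a m M : ℝ} (ha : 0 < a) (haM : a ≤ M) (hm : 0 < m) :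
    1 / m - (a - m) / m ^ 2 + (a - m) ^ 2 / (M * m ^ 2) ≤ 1 / a := by
  have hexact : 1 / a = 1 / m - (a - m) / m ^ 2 + (a - m) ^ 2 / (a * m ^ 2) := by
    field_simp
    ring
  rw [hexact]
  gcongr

lemma div_two_mul_le_sub_sq_div {n m M V s : ℝ} (hn : 0 < n) (hm : 0 < m) (hM : 0 < M)
    (hV : 0 ≤ V) (hVle : V ≤ n * m * M) (hs : n / m + V / (M * m ^ 2) ≤ s) :
    V / (2 * M) ≤ n * m - n ^ 2 / s := by
  have hs' : (n * m * M + V) / (M * m ^ 2) ≤ s := by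
    convert hs using 1
    field_simp
  have hspos : 0 < s := lt_of_lt_of_le (by positivity) hs'
  rw [div_le_iff₀ (by positivity)] at hs'
  have hkey : n ^ 2 * (2 * M) ≤ (n * m * (2 * M) - V) * s := by
    refine le_of_mul_le_mul_right ?_ (by positivity : 0 < M * m ^ 2)
    nlinarith [mul_nonneg hV (sub_nonneg.mpr hVle), mul_le_mul_of_nonneg_left hs'
      (by nlinarith : (0 : ℝ) ≤ n * m * (2 * M) - V)]
  have hinv : n ^ 2 / s ≤ (n * m * (2 * M) - V) / (2 * M) := by
    rwa [div_le_div_iff₀ hspos (by positivity)]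
  rw [sub_div, mul_div_cancel_right₀ _ (by positivity : 2 * M ≠ 0)] at hinv
  linarith

section Mean

variable {ι : Type*} [Fintype ι] {A : ι → ℝ} {m M : ℝ}

local notation "n" => (Fintype.card ι : ℝ)

lemma sum_sub_mean_eq_zero (hm : ∑ k, A k = n * m) : ∑ k, (A k - m) = 0 := by
  rw [sum_sub_distrib, sum_const, card_univ, nsmul_eq_mul, hm, sub_self]

lemma mean_pos [Nonempty ι] (hA : ∀ k, 0 < A k) (hm : ∑ k, A k = n * m) : 0 < m :=
  pos_of_mul_pos_right (hm ▸ sum_pos (fun k _ => hA k) univ_nonempty) (by positivity)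

lemma sum_sq_sub_mean_le_mul_sum [Nonempty ι] (hA : ∀ k, 0 < A k) (hAM : ∀ k, A k ≤ M)
    (hm : ∑ k, A k = n * m) :
    ∑ k, (A k - m) ^ 2 ≤ M * ∑ k, A k := by
  have hm0 := mean_pos hA hm
  -- The deviations sum to zero, so the squares may be weighted by `A k` instead of `A k - m`.
  have hweight : ∑ k, (A k - m) ^ 2 = ∑ k, A k * (A k - m) := by
    have : ∑ k, m * (A k - m) = 0 := by rw [← mul_sum, sum_sub_mean_eq_zero hm, mul_zero]
    rw [← sub_zero (∑ k, A k * (A k - m)), ← this, ← sum_sub_distrib]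
    exact sum_congr rfl fun k _ => by ring
  rw [hweight, mul_sum]
  exact sum_le_sum fun k _ => by nlinarith [hA k, hAM k]

lemma card_div_mean_add_sum_sq_sub_mean_le_sum_inv [Nonempty ι] (hA : ∀ k, 0 < A k)
    (hAM : ∀ k, A k ≤ M) (hm : ∑ k, A k = n * m) :
    n / m + (∑ k, (A k - m) ^ 2) / (M * m ^ 2) ≤ ∑ k, 1 / A k :=
  calc n / m + (∑ k, (A k - m) ^ 2) / (M * m ^ 2)
      = ∑ k, (1 / m - (A k - m) / m ^ 2 + (A k - m) ^ 2 / (M * m ^ 2)) := by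
        rw [sum_add_distrib, sum_sub_distrib, ← sum_div, ← sum_div, ← sum_div,
          sum_sub_mean_eq_zero hm, sum_const, card_univ, nsmul_eq_mul]
        ring
    _ ≤ ∑ k, 1 / A k :=
        sum_le_sum fun k _ => inv_sub_div_sq_add_sq_div_le_inv (hA k) (hAM k) (mean_pos hA hm)

lemma sum_sq_sub_mean_div_two_mul_le_sum_sub_sq_div_sum_inv [Nonempty ι] (hA : ∀ k, 0 < A k)
    (hAM : ∀ k, A k ≤ M) (hm : ∑ k, A k = n * m) :
    (∑ k, (A k - m) ^ 2) / (2 * M) ≤ ∑ k, A k - n ^ 2 / ∑ k, 1 / A k := by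
  have hM : 0 < M := (hA (Classical.arbitrary ι)).trans_le (hAM _)
  have hVle : ∑ k, (A k - m) ^ 2 ≤ n * m * M :=
    (sum_sq_sub_mean_le_mul_sum hA hAM hm).trans_eq (by rw [hm, mul_comm])
  rw [hm]
  exact div_two_mul_le_sub_sq_div (by positivity) (mean_pos hA hm) hM
    (sum_nonneg fun k _ => sq_nonneg _) hVle
    (card_div_mean_add_sum_sq_sub_mean_le_sum_inv hA hAM hm)

end Mean

theorem od_inv_sub_pwd_inv_ge_general (N : ℕ) (hN : 0 < N)
    (P0 : ℝ) (hP0 : 0 < P0) (A : Fin N → ℝ) (hA : ∀ k, 0 < A k)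
    (A0 OD PWD σA2 Amax : ℝ)
    (hA0 : A0 = ∑ k, A k)
    (hOD : OD = P0 / A0)
    (hPWD : PWD = ∑ k, ((P0 / N) / P0) * ((P0 / N) / A k))
    (hσ : σA2 = (1 / (N : ℝ)) * ∑ k, (A k - A0 / N) ^ 2)
    (hAmaxub : ∀ k, A k ≤ Amax) :
    1 / OD - 1 / PWD ≥ N * σA2 / (2 * Amax * P0) := by
  have hNpos : (0 : ℝ) < N := by exact_mod_cast hN
  have : Nonempty (Fin N) := ⟨⟨0, hN⟩⟩
  have hmean : ∑ k, A k = (Fintype.card (Fin N) : ℝ) * (A0 / N) := by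
    rw [Fintype.card_fin, mul_div_cancel₀ _ hNpos.ne', hA0]
  have hgap := sum_sq_sub_mean_div_two_mul_le_sum_sub_sq_div_sum_inv hA hAmaxub hmean
  rw [Fintype.card_fin, ← hA0] at hgap
  have hPWD' : PWD = P0 / N ^ 2 * ∑ k, 1 / A k := by
    rw [hPWD, mul_sum]
    refine sum_congr rfl fun k _ => ?_
    field_simp
  have hlhs : 1 / OD - 1 / PWD = (A0 - N ^ 2 / ∑ k, 1 / A k) / P0 := by
    rw [hOD, hPWD']
    field_simp
  have hrhs : N * σA2 / (2 * Amax * P0) = (∑ k, (A k - A0 / N) ^ 2) / (2 * Amax) / P0 := by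
    rw [hσ, div_div]
    field_simp
  rw [hlhs, hrhs]
  exact div_le_div_of_nonneg_right hgap hP0.le

/-- Proposition 1 (lower bound for equal populations): if all `N` parcels have
the same population `P0/N > 0`, then
`1/OD − 1/PWD ≥ N·σ_A²/(2·A_max·P0)`, where `σ_A²` is the variance of the
parcel areas and `A_max` is the largest parcel area. -/
theorem od_inv_sub_pwd_inv_ge (N : ℕ) (hN : 0 < N)
    (P0 : ℝ) (hP0 : 0 < P0) (A : Fin N → ℝ) (hA : ∀ k, 0 < A k)
    (A0 OD PWD σA2 Amax : ℝ)
    (hA0 : A0 = ∑ k, A k)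
    (hOD : OD = P0 / A0)
    (hPWD : PWD = ∑ k, ((P0 / N) / P0) * ((P0 / N) / A k))
    (hσ : σA2 = (1 / (N : ℝ)) * ∑ k, (A k - A0 / N) ^ 2)
    (hAmaxub : ∀ k, A k ≤ Amax) (hAmaxmem : ∃ k, A k = Amax) :
    1 / OD - 1 / PWD ≥ N * σA2 / (2 * Amax * P0) :=
  od_inv_sub_pwd_inv_ge_general N hN P0 hP0 A hA A0 OD PWD σA2 Amax hA0 hOD hPWD hσ hAmaxub
end

section
/- (Proposition 1, zero-population case) If at least one parcel has zero population (P_j = 0 for some j) while the total population P0 is positive, then the inequality is strict: PWD > OD. -/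
/-!
Writing `Q = ∑ P_k² / A_k`, we have `PWD = Q / P0` and `OD = P0 / A0`, so the claim is
`P0² / A0 < Q`, the strict form of Sedrakyan's inequality. Dropping a parcel `j` with `P_j = 0`
changes neither `P0` nor `Q` but strictly shrinks the total area, and Sedrakyan's inequality on
the remaining parcels then gives `P0² / A0 < P0² / (A0 - A_j) ≤ Q`.
-/

open Finset

namespace Finset

variable {ι R : Type*} [Field R] [LinearOrder R] [IsStrictOrderedRing R]

theorem sq_sum_div_lt_sum_sq_div_of_eq_zero (s : Finset ι) {f g : ι → R}
    (hg : ∀ i ∈ s, 0 < g i) {j : ι} (hj : j ∈ s) (hfj : f j = 0) (hf : ∑ i ∈ s, f i ≠ 0) :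
    (∑ i ∈ s, f i) ^ 2 / ∑ i ∈ s, g i < ∑ i ∈ s, f i ^ 2 / g i := by
  classical
  set t := s.erase j
  have hf_erase : ∑ i ∈ t, f i = ∑ i ∈ s, f i := sum_erase s hfj
  have hfg_erase : ∑ i ∈ t, f i ^ 2 / g i = ∑ i ∈ s, f i ^ 2 / g i :=
    sum_erase s (by simp [hfj])
  have hg_erase : ∑ i ∈ t, g i < ∑ i ∈ s, g i := by
    rw [← add_sum_erase s g hj]
    linarith [hg j hj]
  have ht : t.Nonempty := nonempty_of_sum_ne_zero (hf_erase ▸ hf)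
  have hg_pos : 0 < ∑ i ∈ t, g i := sum_pos (fun i hi ↦ hg i (mem_of_mem_erase hi)) ht
  calc (∑ i ∈ s, f i) ^ 2 / ∑ i ∈ s, g i
      < (∑ i ∈ t, f i) ^ 2 / ∑ i ∈ t, g i := by
        rw [hf_erase]
        exact div_lt_div_of_pos_left (pow_two_pos_of_ne_zero hf) hg_pos hg_erase
    _ ≤ ∑ i ∈ t, f i ^ 2 / g i :=
        sq_sum_div_le_sum_sq_div t f fun i hi ↦ hg i (mem_of_mem_erase hi)
    _ = ∑ i ∈ s, f i ^ 2 / g i := hfg_erase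

end Finset

theorem pwd_gt_od_of_zero_population_general (N : ℕ) (P A : Fin N → ℝ)
    (hA : ∀ k, 0 < A k)
    (P0 A0 OD PWD : ℝ)
    (hP0 : P0 = ∑ k, P k) (hP0pos : 0 < P0)
    (hA0 : A0 = ∑ k, A k)
    (hOD : OD = P0 / A0)
    (hPWD : PWD = ∑ k, (P k / P0) * (P k / A k))
    (hzero : ∃ j, P j = 0) :
    PWD > OD := by
  obtain ⟨j, hj⟩ := hzero
  have hPWD' : PWD = (∑ k, P k ^ 2 / A k) / P0 := by
    rw [hPWD, sum_div]
    exact sum_congr rfl fun k _ ↦ by ring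
  have hOD' : OD = (P0 ^ 2 / A0) / P0 := by
    rw [hOD]
    field_simp
  have hsedrakyan : P0 ^ 2 / A0 < ∑ k, P k ^ 2 / A k := by
    rw [hP0, hA0]
    exact sq_sum_div_lt_sum_sq_div_of_eq_zero univ (fun k _ ↦ hA k) (mem_univ j) hj
      (hP0 ▸ hP0pos.ne')
  rw [hPWD', hOD']
  exact div_lt_div_of_pos_right hsedrakyan hP0pos

/-- Proposition 1 (zero-population case): if some parcel has zero population
while the total population is positive, then `PWD > OD` strictly. -/
theorem pwd_gt_od_of_zero_population (N : ℕ) (P A : Fin N → ℝ)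
    (hP : ∀ k, 0 ≤ P k) (hA : ∀ k, 0 < A k)
    (P0 A0 OD PWD : ℝ)
    (hP0 : P0 = ∑ k, P k) (hP0pos : 0 < P0)
    (hA0 : A0 = ∑ k, A k)
    (hOD : OD = P0 / A0)
    (hPWD : PWD = ∑ k, (P k / P0) * (P k / A k))
    (hzero : ∃ j, P j = 0) :
    PWD > OD :=
  pwd_gt_od_of_zero_population_general N P A hA P0 A0 OD PWD hP0 hP0pos hA0 hOD hPWD hzero
end

section
/- (Boundary-shift sensitivity corollary) With the boundary shift of a population p > 0 from parcel 2 to parcel 1 (areas unchanged), if P_1/A_1 ≥ P_2/A_2 then PWD strictly increases: PWD₂ > PWD₁. Moreover PWD₂ = PWD₁ if and only if P_2/A_2 − P_1/A_1 = p/A_H, where A_H = 2A_1A_2/(A_1 + A_2). -/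
/-! Only the two parcels involved in the shift change their contribution, and expanding the squares
gives `PWD₂ - PWD₁ = (2p/P0)·((P_1/A_1 - P_2/A_2) + p/A_H)`, since `(1/A_1 + 1/A_2)/2 = 1/A_H`.
The factor `2p/P0` and the term `p/A_H` are positive, which gives both claims. -/

theorem Fintype.sum_sub_sum_eq_of_eq_off_pair {ι M : Type*} [Fintype ι] [AddCommGroup M]
    {f g : ι → M} {i j : ι} (hij : i ≠ j) (h : ∀ k, k ≠ i → k ≠ j → g k = f k) :
    ∑ k, g k - ∑ k, f k = (g i - f i) + (g j - f j) := by
  rw [← Finset.sum_sub_distrib]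
  exact Fintype.sum_eq_add i j hij fun k hk => sub_eq_zero.mpr (h k hk.1 hk.2)

theorem weighted_density_pair_shift (a b p A B P0 : ℝ) (hA : 0 < A) (hB : 0 < B) :
    ((a + p) / P0 * ((a + p) / A) - a / P0 * (a / A))
        + ((b - p) / P0 * ((b - p) / B) - b / P0 * (b / B))
      = 2 * p / P0 * ((a / A - b / B) + p / (2 * A * B / (A + B))) := by
  field_simp
  ring

theorem pwd_boundary_shift_increase_general (N : ℕ) (P A : Fin N → ℝ)
    (hA : ∀ k, 0 < A k)
    (P0 : ℝ) (hP0pos : 0 < P0)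
    (i j : Fin N) (hij : i ≠ j) (p : ℝ) (hp : 0 < p)
    (Q : Fin N → ℝ)
    (hQ : Q = fun k => if k = i then P k + p else if k = j then P k - p else P k)
    (PWD₁ PWD₂ A_H : ℝ)
    (hPWD₁ : PWD₁ = ∑ k, (P k / P0) * (P k / A k))
    (hPWD₂ : PWD₂ = ∑ k, (Q k / P0) * (Q k / A k))
    (hAH : A_H = 2 * A i * A j / (A i + A j)) :
    (P i / A i ≥ P j / A j → PWD₂ > PWD₁) ∧
      (PWD₂ = PWD₁ ↔ P j / A j - P i / A i = p / A_H) := by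
  have hAi := hA i
  have hAj := hA j
  have key : PWD₂ - PWD₁ = 2 * p / P0 * ((P i / A i - P j / A j) + p / A_H) := by
    rw [hPWD₁, hPWD₂, Fintype.sum_sub_sum_eq_of_eq_off_pair hij fun k hki hkj => by
      simp [hQ, hki, hkj]]
    simpa [hQ, hij.symm, hAH] using weighted_density_pair_shift (P i) (P j) p _ _ P0 hAi hAj
  have hfactor : 0 < 2 * p / P0 := by positivity
  have hshift : 0 < p / A_H := by rw [hAH]; positivity
  refine ⟨fun h => ?_, ?_⟩
  · have := mul_pos hfactor (add_pos_of_nonneg_of_pos (sub_nonneg.mpr h) hshift)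
    linarith
  · rw [← sub_eq_zero, key, mul_eq_zero, or_iff_right hfactor.ne']
    constructor <;> intro <;> linarith

/-- Boundary-shift sensitivity corollary: shifting a population `p > 0` from
parcel `j` to parcel `i` (areas unchanged), if `P i/A i ≥ P j/A j` then the
population-weighted density strictly increases, and in general
`PWD₂ = PWD₁` if and only if `P j/A j − P i/A i = p/A_H`, where
`A_H = 2·A i·A j/(A i + A j)`. -/
theorem pwd_boundary_shift_increase (N : ℕ) (P A : Fin N → ℝ)
    (hA : ∀ k, 0 < A k)
    (P0 : ℝ) (hP0 : P0 = ∑ k, P k) (hP0pos : 0 < P0)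
    (i j : Fin N) (hij : i ≠ j) (p : ℝ) (hp : 0 < p)
    (Q : Fin N → ℝ)
    (hQ : Q = fun k => if k = i then P k + p else if k = j then P k - p else P k)
    (PWD₁ PWD₂ A_H : ℝ)
    (hPWD₁ : PWD₁ = ∑ k, (P k / P0) * (P k / A k))
    (hPWD₂ : PWD₂ = ∑ k, (Q k / P0) * (Q k / A k))
    (hAH : A_H = 2 * A i * A j / (A i + A j)) :
    (P i / A i ≥ P j / A j → PWD₂ > PWD₁) ∧
      (PWD₂ = PWD₁ ↔ P j / A j - P i / A i = p / A_H) :=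
  pwd_boundary_shift_increase_general N P A hA P0 hP0pos i j hij p hp Q hQ PWD₁ PWD₂ A_H hPWD₁ hPWD₂
    hAH
end

section
/- (Corridor model, offset-grid PWD formula) Let d, D, L, W be reals with 0 < d, 0 < D, 0 < W ≤ L/2, and set K = (D/d − 1)·(W/L)·(2 − W/L), P_1 = 25dL², P_2 = 25dL² + 100(D − d)W(L − W), P_3 = 25dL² + 50(D − d)WL. Then PWD_b = (P_1² + P_2² + 2P_3²)/((P_1 + P_2 + 2P_3)·25L²) satisfies PWD_b = d(1 + K) + d·(D/d − 1)²·(W/L)²·(2(1 − W/L)² + (W/L)²)/(1 + K). -/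
/-! With `s = 1 + K`, the block population is `P₁ + P₂ + 2P₃ = 100 d L² s` and the sum of squared
parcel populations is `2500 d² L⁴ (s² + Q)`, where `Q = (D/d − 1)² (W/L)² (2(1 − W/L)² + (W/L)²)`.
Their quotient, divided by `25 L²`, is `d (s² + Q) / s = d s + d Q / s`. -/

lemma mul_sq_add_div_self {𝕜 : Type*} [Field 𝕜] (a b s : 𝕜) :
    (a * s ^ 2 + b) / s = a * s + b / s := by
  rw [add_div]
  rcases eq_or_ne s 0 with rfl | hs
  · simp
  · field_simp

section CorridorParcels

variable {𝕜 : Type*} [Field 𝕜] {d D L W : 𝕜}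

lemma corridor_parcel_total (hd : d ≠ 0) (hL : L ≠ 0) :
    25 * d * L ^ 2 + (25 * d * L ^ 2 + 100 * (D - d) * W * (L - W))
        + 2 * (25 * d * L ^ 2 + 50 * (D - d) * W * L)
      = 100 * d * L ^ 2 * (1 + (D / d - 1) * (W / L) * (2 - W / L)) := by
  field_simp
  ring

lemma corridor_parcel_sq_total (hd : d ≠ 0) (hL : L ≠ 0) :
    (25 * d * L ^ 2) ^ 2 + (25 * d * L ^ 2 + 100 * (D - d) * W * (L - W)) ^ 2
        + 2 * (25 * d * L ^ 2 + 50 * (D - d) * W * L) ^ 2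
      = 2500 * d ^ 2 * L ^ 4 * ((1 + (D / d - 1) * (W / L) * (2 - W / L)) ^ 2
        + (D / d - 1) ^ 2 * (W / L) ^ 2 * (2 * (1 - W / L) ^ 2 + (W / L) ^ 2)) := by
  field_simp
  ring

end CorridorParcels

theorem pwd_offset_grid_formula_general (d D L W K P1 P2 P3 PWDb : ℝ)
    (hd : 0 < d) (hW : 0 < W) (hWL : W ≤ L / 2)
    (hK : K = (D / d - 1) * (W / L) * (2 - W / L))
    (hP1 : P1 = 25 * d * L ^ 2)
    (hP2 : P2 = 25 * d * L ^ 2 + 100 * (D - d) * W * (L - W))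
    (hP3 : P3 = 25 * d * L ^ 2 + 50 * (D - d) * W * L)
    (hPWDb : PWDb = (P1 ^ 2 + P2 ^ 2 + 2 * P3 ^ 2) / ((P1 + P2 + 2 * P3) * (25 * L ^ 2))) :
    PWDb = d * (1 + K) +
      d * (D / d - 1) ^ 2 * (W / L) ^ 2 * (2 * (1 - W / L) ^ 2 + (W / L) ^ 2) / (1 + K) := by
  have hd₀ : d ≠ 0 := hd.ne'
  have hL₀ : L ≠ 0 := (show 0 < L by linarith).ne'
  set Q := (D / d - 1) ^ 2 * (W / L) ^ 2 * (2 * (1 - W / L) ^ 2 + (W / L) ^ 2)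
  subst hP1 hP2 hP3 hPWDb
  rw [corridor_parcel_sq_total hd₀ hL₀, corridor_parcel_total hd₀ hL₀, ← hK]
  calc 2500 * d ^ 2 * L ^ 4 * ((1 + K) ^ 2 + Q) / (100 * d * L ^ 2 * (1 + K) * (25 * L ^ 2))
      = (2500 * d * L ^ 4) * (d * (1 + K) ^ 2 + d * Q) / ((2500 * d * L ^ 4) * (1 + K)) := by
        ring_nf
    _ = (d * (1 + K) ^ 2 + d * Q) / (1 + K) := mul_div_mul_left _ _ (by positivity)
    _ = d * (1 + K) + d * Q / (1 + K) := mul_sq_add_div_self _ _ _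
    _ = _ := by simp only [Q, mul_assoc]

/-- Corridor model, offset-grid PWD formula: with `0 < d`, `0 < D`,
`0 < W ≤ L/2`, `K = (D/d − 1)(W/L)(2 − W/L)`, and parcel populations
`P1 = 25dL²`, `P2 = 25dL² + 100(D − d)W(L − W)`, `P3 = 25dL² + 50(D − d)WL`,
the offset-grid population-weighted density
`PWD_b = (P1² + P2² + 2P3²)/((P1 + P2 + 2P3)·25L²)` satisfies
`PWD_b = d(1 + K) + d(D/d − 1)²(W/L)²(2(1 − W/L)² + (W/L)²)/(1 + K)`. -/
theorem pwd_offset_grid_formula (d D L W K P1 P2 P3 PWDb : ℝ)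
    (hd : 0 < d) (hD : 0 < D) (hW : 0 < W) (hWL : W ≤ L / 2)
    (hK : K = (D / d - 1) * (W / L) * (2 - W / L))
    (hP1 : P1 = 25 * d * L ^ 2)
    (hP2 : P2 = 25 * d * L ^ 2 + 100 * (D - d) * W * (L - W))
    (hP3 : P3 = 25 * d * L ^ 2 + 50 * (D - d) * W * L)
    (hPWDb : PWDb = (P1 ^ 2 + P2 ^ 2 + 2 * P3 ^ 2) / ((P1 + P2 + 2 * P3) * (25 * L ^ 2))) :
    PWDb = d * (1 + K) +
      d * (D / d - 1) ^ 2 * (W / L) ^ 2 * (2 * (1 - W / L) ^ 2 + (W / L) ^ 2) / (1 + K) :=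
  pwd_offset_grid_formula_general d D L W K P1 P2 P3 PWDb hd hW hWL hK hP1 hP2 hP3 hPWDb
end

section
/- (Corridor model, boundary dependence) With d, D, L, W real, 0 < d < D and 0 < W ≤ L/2, the PWD computed from the offset grid strictly exceeds the PWD computed from the aligned grid: PWD_b − PWD_a = (d/(1 + K))·(D/d − 1)²·(W/L)²·(2(1 − W/L)² + (W/L)²) > 0, where PWD_a = d(1 + K). -/
/-!
The aligned-grid value `PWD_a = d(1 + K)` is exactly the plain mean density of the four
offset cells (populations `P₁, P₂, P₃, P₃`, each of area `25L²`). For cells of equal area `A`,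
the population-weighted density `∑ pᵢ² / (A ∑ pᵢ)` exceeds the plain mean density
`∑ pᵢ / (n A)` by `∑ (pᵢ - p̄)² / (A ∑ pᵢ)`, a variance. Writing `k = D/d - 1`, `w = W/L`,
the deviations of the offset cells from their mean are `25dL²` times
`-K, kw(2 - 3w), kw², kw²`, whose squares sum to `4k²w²(2(1 - w)² + w²)`.
-/

open Finset

theorem sum_sub_avg_sq {ι : Type*} (s : Finset ι) (p : ι → ℝ) (hs : s.Nonempty) :
    ∑ i ∈ s, (p i - (∑ j ∈ s, p j) / #s) ^ 2 = ∑ i ∈ s, p i ^ 2 - (∑ i ∈ s, p i) ^ 2 / #s := by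
  have hn : (#s : ℝ) ≠ 0 := by exact_mod_cast hs.card_pos.ne'
  simp only [sub_sq, sum_add_distrib, sum_sub_distrib, ← sum_mul, ← mul_sum, sum_const,
    nsmul_eq_mul]
  field_simp
  ring

theorem sum_sq_div_sub_avg {ι : Type*} (s : Finset ι) (p : ι → ℝ) (A : ℝ) (hs : s.Nonempty)
    (hp : ∑ i ∈ s, p i ≠ 0) :
    (∑ i ∈ s, p i ^ 2) / ((∑ i ∈ s, p i) * A) - (∑ i ∈ s, p i) / (#s * A) =
      (∑ i ∈ s, (p i - (∑ j ∈ s, p j) / #s) ^ 2) / ((∑ i ∈ s, p i) * A) := by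
  rw [sum_sub_avg_sq s p hs, sub_div, sq, mul_div_assoc, mul_div_mul_left _ _ hp, div_div]

theorem offset_cells_sum_sq_dev (c k w : ℝ) :
    (c - c * (1 + k * w * (2 - w))) ^ 2 +
        (c * (1 + 4 * k * w * (1 - w)) - c * (1 + k * w * (2 - w))) ^ 2 +
        2 * (c * (1 + 2 * k * w) - c * (1 + k * w * (2 - w))) ^ 2 =
      4 * c ^ 2 * k ^ 2 * w ^ 2 * (2 * (1 - w) ^ 2 + w ^ 2) := by
  ring

/-- Corridor model, boundary dependence: with `0 < d < D` and `0 < W ≤ L/2`,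
the offset-grid PWD strictly exceeds the aligned-grid PWD, with difference
`PWD_b − PWD_a = (d/(1 + K))·(D/d − 1)²·(W/L)²·(2(1 − W/L)² + (W/L)²) > 0`,
where `PWD_a = d(1 + K)`. -/
theorem pwd_offset_exceeds_aligned (d D L W K P1 P2 P3 PWDa PWDb : ℝ)
    (hd : 0 < d) (hdD : d < D) (hW : 0 < W) (hWL : W ≤ L / 2)
    (hK : K = (D / d - 1) * (W / L) * (2 - W / L))
    (hP1 : P1 = 25 * d * L ^ 2)
    (hP2 : P2 = 25 * d * L ^ 2 + 100 * (D - d) * W * (L - W))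
    (hP3 : P3 = 25 * d * L ^ 2 + 50 * (D - d) * W * L)
    (hPWDa : PWDa = d * (1 + K))
    (hPWDb : PWDb = (P1 ^ 2 + P2 ^ 2 + 2 * P3 ^ 2) / ((P1 + P2 + 2 * P3) * (25 * L ^ 2))) :
    PWDb - PWDa =
        (d / (1 + K)) * (D / d - 1) ^ 2 * (W / L) ^ 2 * (2 * (1 - W / L) ^ 2 + (W / L) ^ 2) ∧
      PWDb - PWDa > 0 := by
  have hL : 0 < L := by linarith
  have hk : 0 < D / d - 1 := by rw [sub_pos, one_lt_div hd]; exact hdD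
  have hw : 0 < W / L := div_pos hW hL
  have hw_le : W / L ≤ 1 / 2 := by rw [div_le_iff₀ hL]; linarith
  have hK_pos : 0 < 1 + K := by rw [hK]; nlinarith [mul_pos hk hw]
  have hP2' : P2 = 25 * d * L ^ 2 * (1 + 4 * (D / d - 1) * (W / L) * (1 - W / L)) := by
    rw [hP2]; field_simp; ring
  have hP3' : P3 = 25 * d * L ^ 2 * (1 + 2 * (D / d - 1) * (W / L)) := by
    rw [hP3]; field_simp; ring
  have hsum : P1 + P2 + 2 * P3 = 4 * (25 * d * L ^ 2) * (1 + K) := by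
    rw [hP1, hP2', hP3', hK]; ring
  have hcell_mean : (P1 + P2 + 2 * P3) / 4 = 25 * d * L ^ 2 * (1 + K) := by rw [hsum]; ring
  have hmean : PWDa = (P1 + P2 + 2 * P3) / (4 * (25 * L ^ 2)) := by
    rw [hPWDa, ← div_div, hcell_mean]; field_simp
  have hgap : PWDb - PWDa = ((P1 - (P1 + P2 + 2 * P3) / 4) ^ 2 + (P2 - (P1 + P2 + 2 * P3) / 4) ^ 2
      + 2 * (P3 - (P1 + P2 + 2 * P3) / 4) ^ 2) / ((P1 + P2 + 2 * P3) * (25 * L ^ 2)) := by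
    have hsum_pos : 0 < P1 + P2 + 2 * P3 := by rw [hsum]; positivity
    have h := sum_sq_div_sub_avg univ ![P1, P2, P3, P3] (25 * L ^ 2) univ_nonempty
      (by simp [Fin.sum_univ_four]; linarith)
    simp [Fin.sum_univ_four] at h
    rw [hPWDb, hmean]
    convert h using 2 <;> ring
  have hdiff : PWDb - PWDa = (d / (1 + K)) * (D / d - 1) ^ 2 * (W / L) ^ 2 *
      (2 * (1 - W / L) ^ 2 + (W / L) ^ 2) := by
    rw [hgap, hcell_mean, hsum, hP1, hP2', hP3', hK, offset_cells_sum_sq_dev, ← hK]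
    field_simp
  exact ⟨hdiff, hdiff ▸ by positivity⟩
end
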